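/- Let $\theta > k \ge 1$, $L > 1$, and let $\{X^j\}$ be the points $X^j = L q^j$ for $q^j$ the integer points of $[0,m]^k \times \{0\} \subset \mathbb{R}^n$, with $m \ge 8$. Let $\Omega_i$ be the Voronoi cell of $X^i$. Then there is $C = C(\theta,k,n) > 1$, independent of $m$ and $L$, such that for $y \in \Omega_i$ with $L \le |y - X^i| \le \frac{m}{4}L$: $$\frac{1}{C(1+|y-X^i|)^{\theta-k} L^k} \le \sum_j \frac{1}{(1+|y-X^j|)^{\theta}} \le \frac{C}{(1+|y-X^i|)^{\theta-k} L^k}.$$ -/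

import Mathlib

/-!
Write `ρ(q)` for the Chebyshev distance from the index `q` to `qⁱ`, so that
`L ρ(q) ≤ |Xq - Xⁱ| ≤ √n L ρ(q)`, and a Chebyshev ball of radius `t` in `[0, m]ᵏ` has
at most `(2t + 1)ᵏ` points, and at least `(t + 1)ᵏ` once `2t ≤ m`. Put `d = |y - Xⁱ|`.

Lower bound: the `≈ (d / L)ᵏ` points with `ρ ≤ d / L` all lie within `(1 + √n)(1 + d)`
of `y`. Upper bound: the `O((d / L)ᵏ)` points with `L ρ < 2 (1 + d)` contribute at most
`(1 + d)^(-θ)` each, because `y` lies in the Voronoi cell of `Xⁱ`. For the others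
`1 + |y - Xq| ≥ L ρ / 2`, and summing `ρ^(-θ)` against the counting bound `(2t + 1)ᵏ`
(a discrete layer-cake argument) gives `O(L^(-θ) (d / L)^(k - θ))`, which is where `θ > k`
enters.
-/

open Real

/-- The scaled lattice point of `ℝ^n` associated to `q : Fin k → Fin (m+1)` and spacing `L`:
its first `k` coordinates are `L * q i` and the remaining ones vanish. -/
noncomputable def latticePt (n k m : ℕ) (L : ℝ) (q : Fin k → Fin (m + 1)) :
    EuclideanSpace ℝ (Fin n) :=
  WithLp.toLp 2 fun i => if h : (i : ℕ) < k then L * ((q ⟨i, h⟩ : ℕ) : ℝ) else 0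

open Finset

theorem Nat.cast_dist (a b : ℕ) : (Nat.dist a b : ℝ) = |(a : ℝ) - b| := by
  rcases le_total a b with h | h
  · rw [Nat.dist_eq_sub_of_le h, abs_sub_comm, abs_of_nonneg (by simpa using h), Nat.cast_sub h]
  · rw [Nat.dist_eq_sub_of_le_right h, abs_of_nonneg (by simpa using h), Nat.cast_sub h]

theorem card_filter_dist_le_eq (m c t : ℕ) :
    #{a : Fin (m + 1) | Nat.dist a c ≤ t} = min (c + t) m + 1 - (c - t) := by
  have : (univ.filter fun a : Fin (m + 1) => Nat.dist a c ≤ t).map Fin.valEmbedding =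
      Icc (c - t) (min (c + t) m) := by
    ext x
    simp only [mem_map, mem_filter, mem_univ, true_and, Fin.valEmbedding_apply, mem_Icc]
    constructor
    · rintro ⟨a, ha, rfl⟩; unfold Nat.dist at ha; omega
    · intro hx; exact ⟨⟨x, by omega⟩, by unfold Nat.dist; rw [Fin.val_mk]; omega, rfl⟩
  rw [← card_map Fin.valEmbedding, this, Nat.card_Icc]

section Chebyshev
variable {ι : Type*} [Fintype ι] {m : ℕ}

def chebyshevDist (q q' : ι → Fin (m + 1)) : ℕ := univ.sup fun l => Nat.dist (q l) (q' l)

theorem chebyshevDist_le_iff {q q' : ι → Fin (m + 1)} {t : ℕ} :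
    chebyshevDist q q' ≤ t ↔ ∀ l, Nat.dist (q l) (q' l) ≤ t := by
  simp [chebyshevDist]

variable [DecidableEq ι]

def chebyshevBall (c : ι → Fin (m + 1)) (t : ℕ) : Finset (ι → Fin (m + 1)) :=
  {q | chebyshevDist q c ≤ t}

theorem mem_chebyshevBall {c q : ι → Fin (m + 1)} {t : ℕ} :
    q ∈ chebyshevBall c t ↔ chebyshevDist q c ≤ t := by
  simp [chebyshevBall]

theorem chebyshevBall_eq_piFinset (c : ι → Fin (m + 1)) (t : ℕ) :
    chebyshevBall c t = Fintype.piFinset fun l => {a : Fin (m + 1) | Nat.dist a (c l) ≤ t} := by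
  ext q; simp [mem_chebyshevBall, chebyshevDist_le_iff]

theorem card_chebyshevBall_le (c : ι → Fin (m + 1)) (t : ℕ) :
    #(chebyshevBall c t) ≤ (2 * t + 1) ^ Fintype.card ι := by
  rw [chebyshevBall_eq_piFinset, Fintype.card_piFinset]
  exact prod_le_pow_card _ _ _ fun l _ => by rw [card_filter_dist_le_eq]; omega

theorem le_card_chebyshevBall (c : ι → Fin (m + 1)) {t : ℕ} (ht : 2 * t ≤ m) :
    (t + 1) ^ Fintype.card ι ≤ #(chebyshevBall c t) := by
  rw [chebyshevBall_eq_piFinset, Fintype.card_piFinset]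
  exact pow_card_le_prod _ _ _ fun l _ => by
    rw [card_filter_dist_le_eq]; have := (c l).is_le; omega

end Chebyshev

theorem sum_Ico_rpow_neg_le {p : ℝ} (hp : 1 < p) {N : ℕ} (hN : 1 ≤ N) (M : ℕ) :
    ∑ t ∈ Ico N M, (t : ℝ) ^ (-p) ≤ 2 ^ p / (p - 1) * (N : ℝ) ^ (1 - p) := by
  have hN0 : (0 : ℝ) < N := by exact_mod_cast hN
  obtain hMN | hNM := lt_or_ge M N
  · rw [Ico_eq_empty_of_le hMN.le, sum_empty]
    have : 0 < p - 1 := by linarith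
    positivity
  have hshift : ∀ t ∈ Ico N M, (t : ℝ) ^ (-p) ≤ 2 ^ p * ((t + 1 : ℕ) : ℝ) ^ (-p) := by
    intro t ht
    have ht1 : (1 : ℝ) ≤ t := by exact_mod_cast hN.trans (mem_Ico.1 ht).1
    calc (t : ℝ) ^ (-p) = 2 ^ p * (2 * t) ^ (-p) := by
          rw [mul_rpow zero_le_two (by positivity), ← mul_assoc, ← rpow_add two_pos,
            add_neg_cancel, rpow_zero, one_mul]
      _ ≤ 2 ^ p * ((t + 1 : ℕ) : ℝ) ^ (-p) := by
          refine mul_le_mul_of_nonneg_left ?_ (by positivity)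
          exact rpow_le_rpow_of_nonpos (by positivity) (by push_cast; linarith) (by linarith)
  have hanti : AntitoneOn (fun x : ℝ => x ^ (-p)) (Set.Icc N M) :=
    (antitoneOn_rpow_Ioi_of_exponent_nonpos (by linarith)).mono
      fun x hx => hN0.trans_le hx.1
  have h0 : (0 : ℝ) ∉ Set.uIcc (N : ℝ) M := by
    rw [Set.uIcc_of_le (by exact_mod_cast hNM)]; exact fun h => hN0.not_ge h.1
  calc ∑ t ∈ Ico N M, (t : ℝ) ^ (-p)
      ≤ 2 ^ p * ∑ t ∈ Ico N M, ((t + 1 : ℕ) : ℝ) ^ (-p) := by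
        rw [mul_sum]; exact sum_le_sum hshift
    _ ≤ 2 ^ p * ∫ x in (N : ℝ)..M, x ^ (-p) := by
        gcongr; exact hanti.sum_le_integral_Ico hNM
    _ = 2 ^ p / (p - 1) * ((N : ℝ) ^ (1 - p) - (M : ℝ) ^ (1 - p)) := by
        have : p - 1 ≠ 0 := by linarith
        rw [integral_rpow (Or.inr ⟨by linarith, h0⟩), show -p + 1 = -(p - 1) by ring,
          show 1 - p = -(p - 1) by ring]
        field_simp
        ring
    _ ≤ 2 ^ p / (p - 1) * (N : ℝ) ^ (1 - p) := by
        have : 0 < p - 1 := by linarith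
        gcongr
        exact sub_le_self _ (by positivity)

theorem rpow_neg_le_sum_Ico {θ : ℝ} (hθ : -1 ≤ θ) {s : ℕ} (hs : 1 ≤ s) :
    (s : ℝ) ^ (-θ) ≤ 2 ^ (θ + 1) * ∑ t ∈ Ico s (2 * s), (t : ℝ) ^ (-(θ + 1)) := by
  have hs0 : (0 : ℝ) < s := by exact_mod_cast hs
  have hterm : ∀ t ∈ Ico s (2 * s),
      (2 * s : ℝ) ^ (-(θ + 1)) ≤ (t : ℝ) ^ (-(θ + 1)) := by
    intro t ht
    obtain ⟨hst, hts⟩ := mem_Ico.1 ht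
    exact rpow_le_rpow_of_nonpos (hs0.trans_le (by exact_mod_cast hst))
      (by exact_mod_cast hts.le) (by linarith)
  have hcard := card_nsmul_le_sum _ _ _ hterm
  rw [Nat.card_Ico, show 2 * s - s = s by omega, nsmul_eq_mul] at hcard
  calc (s : ℝ) ^ (-θ) = 2 ^ (θ + 1) * (s * (2 * s : ℝ) ^ (-(θ + 1))) := by
        have h2 : (2 : ℝ) ^ (θ + 1) * 2 ^ (-(θ + 1)) = 1 := by
          rw [← rpow_add two_pos, add_neg_cancel, rpow_zero]
        have hs' : (s : ℝ) * (s : ℝ) ^ (-(θ + 1)) = (s : ℝ) ^ (-θ) := by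
          rw [show -θ = 1 + -(θ + 1) by ring, rpow_add hs0, rpow_one]
        rw [mul_rpow zero_le_two hs0.le, ← hs']
        linear_combination (-(s : ℝ) * (s : ℝ) ^ (-(θ + 1))) * h2
    _ ≤ _ := by gcongr

theorem sum_rpow_neg_le_of_card_le {ι : Type*} (S : Finset ι) (r : ι → ℕ) {N k c : ℕ}
    {θ : ℝ} (hN : 1 ≤ N) (hθ : k < θ) (hr : ∀ q ∈ S, N ≤ r q)
    (hcard : ∀ t, N ≤ t → #{q ∈ S | r q ≤ t} ≤ c * t ^ k) :
    ∑ q ∈ S, (r q : ℝ) ^ (-θ) ≤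
      2 ^ (θ + 1) * (2 ^ (θ + 1 - k) / (θ - k)) * c * (N : ℝ) ^ ((k : ℝ) - θ) := by
  set M := 2 * S.sup r
  set f : ℕ → ℝ := fun t => (t : ℝ) ^ (-(θ + 1))
  have hlayer : ∀ q ∈ S, (r q : ℝ) ^ (-θ) ≤
      2 ^ (θ + 1) * ∑ t ∈ Ico N M, if r q ≤ t then f t else 0 := by
    intro q hq
    refine (rpow_neg_le_sum_Ico (by linarith) (hN.trans (hr q hq))).trans ?_
    rw [← sum_filter]
    refine mul_le_mul_of_nonneg_left (sum_le_sum_of_subset_of_nonneg ?_ fun t _ _ => by positivity)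
      (by positivity)
    intro t ht
    have := le_sup (f := r) hq
    have := hr q hq
    simp only [mem_filter, mem_Ico] at ht ⊢
    omega
  have hshell : ∀ t ∈ Ico N M,
      (#{q ∈ S | r q ≤ t} : ℝ) * f t ≤ c * (t : ℝ) ^ (-(θ + 1 - k)) := by
    intro t ht
    have ht0 : (0 : ℝ) < t := Nat.cast_pos.2 (by have := (mem_Ico.1 ht).1; omega)
    calc (#{q ∈ S | r q ≤ t} : ℝ) * f t ≤ (c * t ^ k : ℕ) * f t := by
          gcongr; exact hcard t (mem_Ico.1 ht).1
      _ = c * (t : ℝ) ^ (-(θ + 1 - k)) := by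
          rw [neg_sub, sub_eq_add_neg, rpow_add ht0, rpow_natCast]; push_cast; ring
  calc ∑ q ∈ S, (r q : ℝ) ^ (-θ)
      ≤ ∑ q ∈ S, 2 ^ (θ + 1) * ∑ t ∈ Ico N M, if r q ≤ t then f t else 0 :=
        sum_le_sum hlayer
    _ = 2 ^ (θ + 1) * ∑ t ∈ Ico N M, (#{q ∈ S | r q ≤ t} : ℝ) * f t := by
        rw [← mul_sum, sum_comm]
        simp only [← sum_filter, sum_const, nsmul_eq_mul]
    _ ≤ 2 ^ (θ + 1) * ∑ t ∈ Ico N M, c * (t : ℝ) ^ (-(θ + 1 - k)) :=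
        mul_le_mul_of_nonneg_left (sum_le_sum hshell) (by positivity)
    _ ≤ 2 ^ (θ + 1) *
          (c * (2 ^ (θ + 1 - k) / (θ + 1 - k - 1) * (N : ℝ) ^ (1 - (θ + 1 - k)))) := by
        rw [← mul_sum]
        gcongr
        exact sum_Ico_rpow_neg_le (by linarith) hN M
    _ = _ := by ring_nf

theorem div_pow_div_rpow_eq {D : ℝ} (hD : 0 < D) (L θ : ℝ) (k : ℕ) :
    (D / L) ^ k / D ^ θ = 1 / (D ^ (θ - k) * L ^ (k : ℝ)) := by
  rw [rpow_sub_natCast hD.ne', rpow_natCast, div_pow]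
  field_simp

section Lattice
variable {n k m : ℕ} {L : ℝ}

theorem latticePt_castLE (hkn : k ≤ n) (q : Fin k → Fin (m + 1)) (l : Fin k) :
    latticePt n k m L q (Fin.castLE hkn l) = L * (q l : ℕ) := by
  simp [latticePt]

theorem mul_dist_le_dist_latticePt (hkn : k ≤ n) (hL : 0 ≤ L) (q q' : Fin k → Fin (m + 1))
    (l : Fin k) :
    L * Nat.dist (q l) (q' l) ≤ dist (latticePt n k m L q) (latticePt n k m L q') := by
  have := PiLp.dist_apply_le (latticePt n k m L q) (latticePt n k m L q') (Fin.castLE hkn l)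
  rwa [latticePt_castLE, latticePt_castLE, Real.dist_eq, ← mul_sub, abs_mul, abs_of_nonneg hL,
    ← Nat.cast_dist] at this

theorem mul_chebyshevDist_le_dist_latticePt (hkn : k ≤ n) (hL : 0 < L)
    (q q' : Fin k → Fin (m + 1)) :
    L * chebyshevDist q q' ≤ dist (latticePt n k m L q) (latticePt n k m L q') := by
  rw [← le_div_iff₀' hL, ← Nat.le_floor_iff (by positivity), chebyshevDist_le_iff]
  intro l
  rw [Nat.le_floor_iff (by positivity), le_div_iff₀' hL]
  exact mul_dist_le_dist_latticePt hkn hL.le q q' l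

theorem dist_latticePt_le (hL : 0 ≤ L) {q q' : Fin k → Fin (m + 1)} {s : ℕ}
    (h : chebyshevDist q q' ≤ s) :
    dist (latticePt n k m L q) (latticePt n k m L q') ≤ √n * (L * s) := by
  have hcoord : ∀ i : Fin n,
      dist (latticePt n k m L q i) (latticePt n k m L q' i) ^ 2 ≤ (L * s) ^ 2 := by
    intro i
    refine pow_le_pow_left₀ dist_nonneg ?_ 2
    by_cases hik : (i : ℕ) < k
    · simp only [latticePt, PiLp.toLp_apply, dif_pos hik, Real.dist_eq, ← mul_sub, abs_mul,
        abs_of_nonneg hL, ← Nat.cast_dist]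
      gcongr
      exact_mod_cast chebyshevDist_le_iff.1 h _
    · simp [latticePt, dif_neg hik]
      positivity
  rw [EuclideanSpace.dist_eq, ← Real.sqrt_sq (by positivity : 0 ≤ L * s),
    ← Real.sqrt_mul n.cast_nonneg]
  gcongr
  simpa using sum_le_sum fun i (_ : i ∈ univ) => hcoord i

theorem le_sum_latticePt {θ : ℝ} (hθ : 0 ≤ θ) (hL : 1 ≤ L) (qi : Fin k → Fin (m + 1))
    (y : EuclideanSpace ℝ (Fin n)) (hdm : 2 * dist y (latticePt n k m L qi) ≤ m * L) :
    (2 ^ k * (1 + √n) ^ θ)⁻¹ /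
        ((1 + dist y (latticePt n k m L qi)) ^ (θ - k) * L ^ (k : ℝ)) ≤
      ∑ qj, 1 / (1 + dist y (latticePt n k m L qj)) ^ θ := by
  set d := dist y (latticePt n k m L qi)
  have hL0 : 0 < L := one_pos.trans_le hL
  set s := ⌊d / L⌋₊
  have hsd : L * s ≤ d := by
    rw [← le_div_iff₀' hL0]; exact Nat.floor_le (by positivity)
  have hsm : 2 * s ≤ m := by
    have : (2 * s : ℝ) ≤ m := by nlinarith
    exact_mod_cast this
  set B := chebyshevBall qi s
  have hB : (s + 1) ^ k ≤ #B := by simpa using le_card_chebyshevBall qi hsm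
  have hterm : ∀ q ∈ B,
      1 / ((1 + √n) * (1 + d)) ^ θ ≤ 1 / (1 + dist y (latticePt n k m L q)) ^ θ := by
    intro q hq
    have hq' := dist_latticePt_le (n := n) hL0.le (mem_chebyshevBall.1 hq)
    have := dist_triangle y (latticePt n k m L qi) (latticePt n k m L q)
    rw [dist_comm (latticePt n k m L q)] at hq'
    gcongr
    nlinarith [Real.sqrt_nonneg n]
  have hsD : (1 + d) / (2 * L) ≤ s + 1 := by
    rw [div_le_iff₀ (by positivity)]
    nlinarith [Nat.lt_floor_add_one (d / L), mul_div_cancel₀ d hL0.ne']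
  calc (2 ^ k * (1 + √n) ^ θ)⁻¹ / ((1 + d) ^ (θ - k) * L ^ (k : ℝ))
      = ((1 + d) / (2 * L)) ^ k * (1 / ((1 + √n) * (1 + d)) ^ θ) := by
        rw [div_eq_mul_one_div, ← div_pow_div_rpow_eq (by positivity),
          mul_rpow (by positivity) (by positivity), div_pow, div_pow, mul_pow]
        field_simp
    _ ≤ (s + 1) ^ k * (1 / ((1 + √n) * (1 + d)) ^ θ) := by gcongr
    _ ≤ #B * (1 / ((1 + √n) * (1 + d)) ^ θ) := by gcongr; exact_mod_cast hB
    _ ≤ ∑ q ∈ B, 1 / (1 + dist y (latticePt n k m L q)) ^ θ := by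
        rw [← nsmul_eq_mul]; exact card_nsmul_le_sum _ _ _ hterm
    _ ≤ ∑ qj, 1 / (1 + dist y (latticePt n k m L qj)) ^ θ :=
        sum_le_sum_of_subset_of_nonneg (subset_univ _) fun _ _ _ => by positivity

theorem sum_near_latticePt_le {θ : ℝ} (hθ : 0 ≤ θ) (qi : Fin k → Fin (m + 1))
    (y : EuclideanSpace ℝ (Fin n))
    (hvor : ∀ qj, dist y (latticePt n k m L qi) ≤ dist y (latticePt n k m L qj)) (N : ℕ) :
    ∑ q ∈ {q | chebyshevDist q qi < N}, 1 / (1 + dist y (latticePt n k m L q)) ^ θ ≤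
      (2 * N + 1) ^ k / (1 + dist y (latticePt n k m L qi)) ^ θ := by
  have hcard : #({q | chebyshevDist q qi < N} : Finset (Fin k → Fin (m + 1))) ≤
      (2 * N + 1) ^ k := by
    refine (card_le_card fun q hq => ?_).trans (by simpa using card_chebyshevBall_le qi N)
    exact mem_chebyshevBall.2 (mem_filter.1 hq).2.le
  calc _ ≤ #({q | chebyshevDist q qi < N} : Finset (Fin k → Fin (m + 1))) •
        (1 / (1 + dist y (latticePt n k m L qi)) ^ θ) :=
        sum_le_card_nsmul _ _ _ fun q _ => by gcongr; exact hvor q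
    _ ≤ _ := by
        rw [nsmul_eq_mul, mul_one_div]
        gcongr
        exact_mod_cast hcard

theorem sum_far_latticePt_le (hkn : k ≤ n) {θ : ℝ} (hθ : k < θ) (hL : 0 < L)
    (qi : Fin k → Fin (m + 1)) (y : EuclideanSpace ℝ (Fin n)) {N : ℕ}
    (hN : 2 * (1 + dist y (latticePt n k m L qi)) ≤ L * N) :
    ∑ q ∈ {q | N ≤ chebyshevDist q qi}, 1 / (1 + dist y (latticePt n k m L q)) ^ θ ≤
      (2 / L) ^ θ *
        (2 ^ (θ + 1) * (2 ^ (θ + 1 - k) / (θ - k)) * 3 ^ k * (N : ℝ) ^ ((k : ℝ) - θ)) := by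
  have hN1 : 1 ≤ N := by
    by_contra! h
    simp only [Nat.lt_one_iff.1 h, CharP.cast_eq_zero, mul_zero] at hN
    linarith [dist_nonneg (x := y) (y := latticePt n k m L qi)]
  have hterm : ∀ q ∈ ({q | N ≤ chebyshevDist q qi} : Finset (Fin k → Fin (m + 1))),
      1 / (1 + dist y (latticePt n k m L q)) ^ θ ≤
        (2 / L) ^ θ * (chebyshevDist q qi : ℝ) ^ (-θ) := by
    intro q hq
    have hNq : (N : ℝ) ≤ chebyshevDist q qi := by exact_mod_cast (mem_filter.1 hq).2
    have hρ := mul_chebyshevDist_le_dist_latticePt hkn hL q qi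
    have := dist_triangle_left (latticePt n k m L q) (latticePt n k m L qi) y
    have hρ0 : (0 : ℝ) < chebyshevDist q qi := by
      have : (1 : ℝ) ≤ N := by exact_mod_cast hN1
      linarith
    rw [one_div, rpow_neg hρ0.le, ← div_eq_mul_inv, ← div_rpow (by positivity) hρ0.le,
      div_div, ← inv_div, inv_rpow (by positivity)]
    refine inv_anti₀ (by positivity) (rpow_le_rpow (by positivity) ?_ (by linarith))
    linarith [mul_le_mul_of_nonneg_left hNq hL.le]
  have hcard : ∀ t, N ≤ t →
      #{q ∈ {q | N ≤ chebyshevDist q qi} | chebyshevDist q qi ≤ t} ≤ 3 ^ k * t ^ k := by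
    intro t ht
    calc _ ≤ #(chebyshevBall qi t) :=
          card_le_card fun q hq => mem_chebyshevBall.2 (mem_filter.1 hq).2
      _ ≤ (2 * t + 1) ^ k := by simpa using card_chebyshevBall_le qi t
      _ ≤ 3 ^ k * t ^ k := by rw [← mul_pow]; gcongr; omega
  calc _ ≤ ∑ q ∈ {q | N ≤ chebyshevDist q qi},
          (2 / L) ^ θ * (chebyshevDist q qi : ℝ) ^ (-θ) := sum_le_sum hterm
    _ ≤ _ := by
        rw [← mul_sum]
        gcongr
        exact_mod_cast
          sum_rpow_neg_le_of_card_le _ _ hN1 hθ (fun q hq => (mem_filter.1 hq).2) hcard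

theorem sum_latticePt_le (hkn : k ≤ n) {θ : ℝ} (hθ : k < θ) (hL : 0 < L)
    (qi : Fin k → Fin (m + 1)) (y : EuclideanSpace ℝ (Fin n))
    (hvor : ∀ qj, dist y (latticePt n k m L qi) ≤ dist y (latticePt n k m L qj))
    (hd : L ≤ 1 + dist y (latticePt n k m L qi)) :
    ∑ qj, 1 / (1 + dist y (latticePt n k m L qj)) ^ θ ≤
      (9 ^ k + 6 ^ k * (2 ^ (θ + 1) * (2 ^ (θ + 1 - k) / (θ - k)))) /
        ((1 + dist y (latticePt n k m L qi)) ^ (θ - k) * L ^ (k : ℝ)) := by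
  set D := 1 + dist y (latticePt n k m L qi)
  set K := 2 ^ (θ + 1) * (2 ^ (θ + 1 - k) / (θ - k))
  have hD0 : 0 < D := by positivity
  set N := ⌈2 * D / L⌉₊
  have hN : 2 / L * D ≤ N := by rw [div_mul_eq_mul_div]; exact Nat.le_ceil _
  have hnear : (2 * N + 1) ^ k / D ^ θ ≤ 9 ^ k * ((D / L) ^ k / D ^ θ) := by
    have := Nat.ceil_lt_add_one (by positivity : 0 ≤ 2 * D / L)
    have : 1 ≤ D / L := (one_le_div hL).2 hd
    rw [← mul_div_assoc, ← mul_pow]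
    gcongr
    linarith [mul_div_assoc 2 D L, div_mul_eq_mul_div 2 L D]
  have hfar : (2 / L) ^ θ * (K * 3 ^ k * (N : ℝ) ^ ((k : ℝ) - θ)) ≤
      6 ^ k * K * ((D / L) ^ k / D ^ θ) := by
    calc (2 / L) ^ θ * (K * 3 ^ k * (N : ℝ) ^ ((k : ℝ) - θ))
        ≤ (2 / L) ^ θ * (K * 3 ^ k * (2 / L * D) ^ ((k : ℝ) - θ)) := by
          have := rpow_le_rpow_of_nonpos (by positivity) hN (sub_nonpos.2 hθ.le)
          gcongr
      _ = 6 ^ k * K * ((D / L) ^ k / D ^ θ) := by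
          rw [rpow_sub (by positivity), rpow_natCast, mul_rpow (by positivity) hD0.le,
            show (6 : ℝ) ^ k = 2 ^ k * 3 ^ k by rw [← mul_pow]; norm_num]
          field_simp
          rw [mul_div_assoc, mul_pow]
          ring
  have hLN : 2 * D ≤ L * N := by
    rw [div_mul_eq_mul_div, div_le_iff₀ hL] at hN; linarith
  have hsplit := sum_filter_add_sum_filter_not univ (fun q => chebyshevDist q qi < N)
    fun q => 1 / (1 + dist y (latticePt n k m L q)) ^ θ
  simp_rw [not_lt] at hsplit
  rw [div_eq_mul_one_div, ← div_pow_div_rpow_eq hD0]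
  linarith [sum_near_latticePt_le ((Nat.cast_nonneg k).trans hθ.le) qi y hvor N,
    sum_far_latticePt_le hkn hθ hL qi y hLN]

end Lattice

theorem stmt_12_general {n k : ℕ} (θ : ℝ) (hkn : k ≤ n) (hθ : (k : ℝ) < θ) :
    ∃ C : ℝ, 1 < C ∧ ∀ m : ℕ, 8 ≤ m → ∀ L : ℝ, 1 < L →
      ∀ qi : Fin k → Fin (m + 1), ∀ y : EuclideanSpace ℝ (Fin n),
        (∀ qj : Fin k → Fin (m + 1),
          dist y (latticePt n k m L qi) ≤ dist y (latticePt n k m L qj)) →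
        L ≤ dist y (latticePt n k m L qi) →
        dist y (latticePt n k m L qi) ≤ ((m : ℝ) / 4) * L →
        1 / (C * (1 + dist y (latticePt n k m L qi)) ^ (θ - k) * L ^ (k : ℝ)) ≤
          (∑ qj : Fin k → Fin (m + 1), 1 / (1 + dist y (latticePt n k m L qj)) ^ θ) ∧
        (∑ qj : Fin k → Fin (m + 1), 1 / (1 + dist y (latticePt n k m L qj)) ^ θ) ≤
          C / ((1 + dist y (latticePt n k m L qi)) ^ (θ - k) * L ^ (k : ℝ)) := by
  set c₁ : ℝ := (2 ^ k * (1 + √n) ^ θ)⁻¹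
  set c₂ : ℝ := 9 ^ k + 6 ^ k * (2 ^ (θ + 1) * (2 ^ (θ + 1 - k) / (θ - k)))
  have hθk : 0 < θ - k := sub_pos.2 hθ
  have hc₁ : 0 < c₁ := by positivity
  have hc₂ : 0 < c₂ := by positivity
  refine ⟨1 + c₂ + c₁⁻¹, by linarith [inv_pos.2 hc₁], ?_⟩
  intro m _ L hL qi y hvor hlow hup
  have hlower : c₁ / _ ≤ _ := le_sum_latticePt ((Nat.cast_nonneg k).trans hθ.le) hL.le qi y
    (by nlinarith [dist_nonneg (x := y) (y := latticePt n k m L qi)])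
  have hupper : _ ≤ c₂ / _ := sum_latticePt_le hkn hθ (by linarith) qi y hvor (by linarith)
  constructor
  · refine le_trans ?_ hlower
    rw [mul_assoc, ← div_div, one_div]
    gcongr
    exact inv_le_of_inv_le₀ hc₁ (by linarith)
  · exact hupper.trans (by gcongr; linarith [inv_pos.2 hc₁])

theorem stmt_12 {n k : ℕ} (θ : ℝ) (hk : 1 ≤ k) (hkn : k ≤ n) (hθ : (k : ℝ) < θ) :
    ∃ C : ℝ, 1 < C ∧ ∀ m : ℕ, 8 ≤ m → ∀ L : ℝ, 1 < L →
      ∀ qi : Fin k → Fin (m + 1), ∀ y : EuclideanSpace ℝ (Fin n),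
        (∀ qj : Fin k → Fin (m + 1),
          dist y (latticePt n k m L qi) ≤ dist y (latticePt n k m L qj)) →
        L ≤ dist y (latticePt n k m L qi) →
        dist y (latticePt n k m L qi) ≤ ((m : ℝ) / 4) * L →
        1 / (C * (1 + dist y (latticePt n k m L qi)) ^ (θ - k) * L ^ (k : ℝ)) ≤
          (∑ qj : Fin k → Fin (m + 1), 1 / (1 + dist y (latticePt n k m L qj)) ^ θ) ∧
        (∑ qj : Fin k → Fin (m + 1), 1 / (1 + dist y (latticePt n k m L qj)) ^ θ) ≤
          C / ((1 + dist y (latticePt n k m L qi)) ^ (θ - k) * L ^ (k : ℝ)) :=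
  stmt_12_general θ hkn hθ
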